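/- Let Y₁, Y₂ be two channels with common finite input alphabet. Then the condition 'I(X;Y₁|U) - I(X;Y₂|U) ≥ I(X;Y₁) - I(X;Y₂) for all Markov chains U → X → (Y₁,Y₂)' is equivalent to 'I(U;Y₂) ≥ I(U;Y₁) for all Markov chains U → X → (Y₁,Y₂)'. -/

import Mathlib

open Real

/-- Mutual information (in bits) of a joint pmf `q` on a product of finite alphabets,
with the conventions `log 0 = 0`, `x / 0 = 0`. -/
noncomputable def mutualInfo {A B : Type*} [Fintype A] [Fintype B] (q : A → B → ℝ) : ℝ :=
  ∑ a, ∑ b, q a b * Real.logb 2 (q a b / ((∑ b', q a b') * (∑ a', q a' b)))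

/-- Conditional mutual information `I(A;B|U)` (in bits) of a joint pmf `r` on `U × A × B`. -/
noncomputable def condMutualInfo {U A B : Type*} [Fintype U] [Fintype A] [Fintype B]
    (r : U → A → B → ℝ) : ℝ :=
  ∑ u, ∑ a, ∑ b, r u a b *
    Real.logb 2 ((r u a b * (∑ a', ∑ b', r u a' b')) / ((∑ b', r u a b') * (∑ a', r u a' b)))


/-! Under `U → X → Y` the pointwise information density splits as
`log (W(y|x) / P(y|u)) = log (W(y|x) / P(y)) - log (P(y|u) / P(y))`; averaging against the joint law
gives the chain rule `I(X;Y|U) = I(X;Y) - I(U;Y)`. Subtracting it for the two channels turns one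
condition into the other. -/

open Finset

lemma sum_ne_zero_of_nonneg_of_ne_zero {ι M : Type*} [Fintype ι] [AddCommMonoid M]
    [PartialOrder M] [AddLeftMono M] {f : ι → M} (hf : ∀ i, 0 ≤ f i) {i : ι} (hi : f i ≠ 0) :
    ∑ j, f j ≠ 0 :=
  fun h => hi ((sum_eq_zero_iff_of_nonneg fun j _ => hf j).1 h i (mem_univ i))

lemma mul_logb_mul_div_self (c w t : ℝ) :
    c * w * (logb 2 (c * w / c) - t) = c * w * (logb 2 w - t) := by
  rcases eq_or_ne c 0 with rfl | hc
  · simp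
  · rw [mul_div_cancel_left₀ w hc]

lemma mutualInfo_eq_sum_mul_logb_sub {A B : Type*} [Fintype A] [Fintype B] {r : A → B → ℝ}
    (hr : ∀ a b, 0 ≤ r a b) :
    mutualInfo r = ∑ a, ∑ b, r a b *
      (logb 2 (r a b / ∑ b', r a b') - logb 2 (∑ a', r a' b)) := by
  refine sum_congr rfl fun a _ => sum_congr rfl fun b _ => ?_
  rcases eq_or_ne (r a b) 0 with h | h
  · simp [h]
  have hA := sum_ne_zero_of_nonneg_of_ne_zero (hr a) h
  have hB := sum_ne_zero_of_nonneg_of_ne_zero (hr · b) h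
  rw [← div_div, logb_div (div_ne_zero h hA) hB]

lemma condMutualInfo_eq_sum_mul_logb_sub {U A B : Type*} [Fintype U] [Fintype A] [Fintype B]
    {r : U → A → B → ℝ} (hr : ∀ u a b, 0 ≤ r u a b) :
    condMutualInfo r = ∑ u, ∑ a, ∑ b, r u a b *
      (logb 2 (r u a b / ∑ b', r u a b') - logb 2 ((∑ a', r u a' b) / ∑ a', ∑ b', r u a' b')) := by
  refine sum_congr rfl fun u _ => sum_congr rfl fun a _ => sum_congr rfl fun b _ => ?_
  rcases eq_or_ne (r u a b) 0 with h | h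
  · simp [h]
  have hUA := sum_ne_zero_of_nonneg_of_ne_zero (hr u a) h
  have hUB := sum_ne_zero_of_nonneg_of_ne_zero (hr u · b) h
  have hU := sum_ne_zero_of_nonneg_of_ne_zero (fun a' => sum_nonneg fun b' _ => hr u a' b') hUA
  rw [← logb_div (div_ne_zero h hUA) (div_ne_zero hUB hU)]
  congr 2
  field_simp

section MarkovChain

variable {U X Y : Type*} [Fintype U] [Fintype X] [Fintype Y] {q : U → X → ℝ} {W : X → Y → ℝ}

lemma condMutualInfo_mul_channel_eq_sum (hq : ∀ u x, 0 ≤ q u x) (hW : ∀ x y, 0 ≤ W x y)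
    (hWs : ∀ x, ∑ y, W x y = 1) :
    condMutualInfo (fun u x y => q u x * W x y) = ∑ u, ∑ x, ∑ y, q u x * W x y *
      (logb 2 (W x y) - logb 2 ((∑ x', q u x' * W x' y) / ∑ x', q u x')) := by
  rw [condMutualInfo_eq_sum_mul_logb_sub fun u x y => mul_nonneg (hq u x) (hW x y)]
  simp only [← mul_sum, hWs, mul_one, mul_logb_mul_div_self]

lemma mutualInfo_marginal_mul_channel_eq_sum (hq : ∀ u x, 0 ≤ q u x) (hW : ∀ x y, 0 ≤ W x y)
    (hWs : ∀ x, ∑ y, W x y = 1) :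
    mutualInfo (fun x y => (∑ u, q u x) * W x y) = ∑ u, ∑ x, ∑ y, q u x * W x y *
      (logb 2 (W x y) - logb 2 (∑ x', (∑ u', q u' x') * W x' y)) := by
  rw [mutualInfo_eq_sum_mul_logb_sub fun x y =>
    mul_nonneg (sum_nonneg fun u _ => hq u x) (hW x y)]
  simp only [← mul_sum, hWs, mul_one, mul_logb_mul_div_self]
  simp only [sum_mul]
  rw [sum_comm (s := univ (α := U))]
  exact sum_congr rfl fun x _ => sum_comm

lemma mutualInfo_comp_channel_eq_sum (hq : ∀ u x, 0 ≤ q u x) (hW : ∀ x y, 0 ≤ W x y)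
    (hWs : ∀ x, ∑ y, W x y = 1) :
    mutualInfo (fun u y => ∑ x, q u x * W x y) = ∑ u, ∑ x, ∑ y, q u x * W x y *
      (logb 2 ((∑ x', q u x' * W x' y) / ∑ x', q u x') -
        logb 2 (∑ x', (∑ u', q u' x') * W x' y)) := by
  have hU : ∀ u, ∑ y, ∑ x, q u x * W x y = ∑ x, q u x := fun u => by
    rw [sum_comm]
    simp only [← mul_sum, hWs, mul_one]
  have hY : ∀ y, ∑ u, ∑ x, q u x * W x y = ∑ x, (∑ u, q u x) * W x y := fun y => by
    rw [sum_comm]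
    simp only [sum_mul]
  rw [mutualInfo_eq_sum_mul_logb_sub fun u y =>
    sum_nonneg fun x _ => mul_nonneg (hq u x) (hW x y)]
  simp only [hU, hY, sum_mul (s := univ (α := X))]
  exact sum_congr rfl fun u _ => sum_comm

theorem condMutualInfo_mul_channel_eq_sub (hq : ∀ u x, 0 ≤ q u x)
    (hW : ∀ x y, 0 ≤ W x y) (hWs : ∀ x, ∑ y, W x y = 1) :
    condMutualInfo (fun u x y => q u x * W x y) =
      mutualInfo (fun x y => (∑ u, q u x) * W x y) -
        mutualInfo (fun u y => ∑ x, q u x * W x y) := by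
  simp only [condMutualInfo_mul_channel_eq_sum hq hW hWs,
    mutualInfo_marginal_mul_channel_eq_sum hq hW hWs, mutualInfo_comp_channel_eq_sum hq hW hWs,
    ← sum_sub_distrib, ← mul_sub, sub_sub_sub_cancel_right]

end MarkovChain

/-- The condition I(X;Y₁|U) - I(X;Y₂|U) ≥ I(X;Y₁) - I(X;Y₂) for all Markov chains
U → X → (Y₁,Y₂) is equivalent to I(U;Y₂) ≥ I(U;Y₁) for all such Markov chains. -/
theorem stmt15 {m n₁ n₂ : ℕ} (W₁ : Fin m → Fin n₁ → ℝ) (W₂ : Fin m → Fin n₂ → ℝ)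
    (hW₁ : ∀ x y, 0 ≤ W₁ x y) (hW₁s : ∀ x, ∑ y, W₁ x y = 1)
    (hW₂ : ∀ x y, 0 ≤ W₂ x y) (hW₂s : ∀ x, ∑ y, W₂ x y = 1) :
    (∀ (k : ℕ) (q : Fin k → Fin m → ℝ), (∀ u x, 0 ≤ q u x) → (∑ u, ∑ x, q u x) = 1 →
        mutualInfo (fun x y₁ => (∑ u, q u x) * W₁ x y₁)
            - mutualInfo (fun x y₂ => (∑ u, q u x) * W₂ x y₂)
          ≤ condMutualInfo (fun u x y₁ => q u x * W₁ x y₁)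
            - condMutualInfo (fun u x y₂ => q u x * W₂ x y₂)) ↔
    (∀ (k : ℕ) (q : Fin k → Fin m → ℝ), (∀ u x, 0 ≤ q u x) → (∑ u, ∑ x, q u x) = 1 →
        mutualInfo (fun u y₁ => ∑ x, q u x * W₁ x y₁)
          ≤ mutualInfo (fun u y₂ => ∑ x, q u x * W₂ x y₂)) := by
  constructor <;>
  · intro h k q hq hs
    have := h k q hq hs
    rw [condMutualInfo_mul_channel_eq_sub hq hW₁ hW₁s,
      condMutualInfo_mul_channel_eq_sub hq hW₂ hW₂s] at *
    linarith
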